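/- The mixed discriminant is nonnegative on positive semidefinite matrices: for all A₁,…,Aₙ ∈ ℳⁿ, D(A₁,…,Aₙ) ≥ 0. -/

import Mathlib

/-- The mixed discriminant of `n` real `n × n` matrices:
`D(A₁,…,Aₙ) = (1/n!) Σ_{σ ∈ S(n)} det(M_σ)`, where the `j`-th column of `M_σ`
is the `j`-th column of `A_{σ(j)}`. -/
noncomputable def mixedDisc (n : ℕ) (A : Fin n → Matrix (Fin n) (Fin n) ℝ) : ℝ :=
  ((n.factorial : ℝ))⁻¹ *
    ∑ σ : Equiv.Perm (Fin n), (Matrix.of fun i j => A (σ j) i j).det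

/-!
Factor each `Aᵢ = Bᵢᵀ Bᵢ`. Expanding `det M_σ` multilinearly in its columns, each of which is a
combination of rows of a factor, and reindexing the choice of rows by `σ`, the permutation only
contributes `sign σ` times a term of the Leibniz expansion of `det W_k`, where row `i` of `W_k` is
row `k i` of `Bᵢ`. Summing over `σ` gives the Cauchy–Binet type identity
`Σ_σ det M_σ = Σ_k (det W_k)²`, which is nonnegative.
-/

open Finset Equiv

namespace Matrix

variable {ι κ R : Type*} [Fintype ι] [DecidableEq ι] [Fintype κ] [CommRing R]

theorem det_of_sum_smul_rows (w : ι → κ → R) (v : ι → κ → ι → R) :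
    det (of fun i => ∑ c, w i c • v i c) =
      ∑ g : ι → κ, (∏ i, w i (g i)) * det (of fun i => v i (g i)) := by
  refine ((detRowAlternating : (ι → R) [⋀^ι]→ₗ[R] R).toMultilinearMap.map_sum
    fun i c => w i c • v i c).trans ?_
  simp_rw [MultilinearMap.map_smul_univ]
  rfl

theorem det_of_perm_transpose_mul_self (B : ι → Matrix κ ι R) (σ : Perm ι) :
    det (of fun i j => ((B (σ j))ᵀ * B (σ j)) i j) =
      ∑ k : ι → κ, Perm.sign σ * det (of fun i j => B i (k i) j) * ∏ j, B (σ j) (k (σ j)) j := by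
  have rows : (of fun i j => ((B (σ j))ᵀ * B (σ j)) i j)ᵀ =
      of fun j => ∑ c, B (σ j) c j • fun i => B (σ j) c i := by
    ext j i
    simp [mul_apply, mul_comm]
  rw [← det_transpose, rows, det_of_sum_smul_rows]
  refine Fintype.sum_equiv (σ.arrowCongr (Equiv.refl κ)) _ _ fun g => ?_
  obtain ⟨k, rfl⟩ := (σ.arrowCongr (Equiv.refl κ)).symm.surjective g
  have hperm : (of fun j i => B (σ j) (k (σ j)) i) = (of fun i j => B i (k i) j).submatrix σ id :=
    rfl
  simp only [apply_symm_apply, arrowCongr_symm, arrowCongr_apply, symm_symm, refl_symm, coe_refl,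
    Function.comp_apply, id]
  rw [hperm, det_permute]
  ring

theorem sum_perm_det_of_transpose_mul_self (B : ι → Matrix κ ι R) :
    ∑ σ : Perm ι, det (of fun i j => ((B (σ j))ᵀ * B (σ j)) i j) =
      ∑ k : ι → κ, det (of fun i j => B i (k i) j) ^ 2 := by
  simp_rw [det_of_perm_transpose_mul_self]
  rw [sum_comm]
  refine sum_congr rfl fun k _ => ?_
  rw [sq, det_apply' (of fun i j => B i (k i) j), sum_mul]
  refine sum_congr rfl fun σ _ => ?_
  simp only [of_apply]
  ring

theorem PosSemidef.exists_eq_transpose_mul_self {A : Matrix ι ι ℝ} (hA : A.PosSemidef) :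
    ∃ B : Matrix ι ι ℝ, A = Bᵀ * B := by
  open scoped MatrixOrder in
  exact CStarAlgebra.nonneg_iff_eq_star_mul_self.mp hA.nonneg

end Matrix

open Matrix in
theorem mixedDisc_nonneg {n : ℕ} (A : Fin n → Matrix (Fin n) (Fin n) ℝ)
    (hA : ∀ i, (A i).PosSemidef) : 0 ≤ mixedDisc n A := by
  choose B hB using fun i => (hA i).exists_eq_transpose_mul_self
  obtain rfl : A = fun i => (B i)ᵀ * B i := funext hB
  rw [mixedDisc, sum_perm_det_of_transpose_mul_self]
  positivity
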